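/- arXiv:2404.18305 — 6 statements merged into one kernel-verified Lean document; each statement's English description precedes it below -/
import Mathlib

section
/- Let n, m be positive integers, A an n×n real matrix and C an m×n real matrix. The continuous-time linear system ẋ = A x with output y = C x is observable — i.e., for every x₀ ∈ ℝⁿ, if C·exp(tA)·x₀ = 0 for all t ∈ ℝ then x₀ = 0 — if and only if the observability kernel N(A,C) = {x ∈ ℝⁿ : C Aᵏ x = 0 for all 0 ≤ k ≤ n−1} is the zero subspace (equivalently, the stacked observability matrix [C; CA; CA²; …; CA^{n−1}] has rank n). -/
open Matrix

section

attribute [local instance] Matrix.linftyOpNormedRing Matrix.linftyOpNormedAlgebra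

/-- The output map `M ↦ C (M x)` as a linear map in the matrix `M`. -/
private def obsL {n m : ℕ} (C : Matrix (Fin m) (Fin n) ℝ) (x : Fin n → ℝ) :
    Matrix (Fin n) (Fin n) ℝ →ₗ[ℝ] (Fin m → ℝ) where
  toFun M := C.mulVec (M.mulVec x)
  map_add' M N := by simp [Matrix.add_mulVec, Matrix.mulVec_add]
  map_smul' c M := by simp [Matrix.smul_mulVec, Matrix.mulVec_smul]

private lemma obsL_apply {n m : ℕ} (C : Matrix (Fin m) (Fin n) ℝ) (x : Fin n → ℝ)
    (M : Matrix (Fin n) (Fin n) ℝ) : obsL C x M = C.mulVec (M.mulVec x) := rfl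

/-- If the output is identically zero then all `C Aᵏ x` vanish. -/
private lemma all_pow_zero {n m : ℕ}
    (A : Matrix (Fin n) (Fin n) ℝ) (C : Matrix (Fin m) (Fin n) ℝ) (x : Fin n → ℝ)
    (h : ∀ t : ℝ, C.mulVec ((NormedSpace.exp (t • A)).mulVec x) = 0) :
    ∀ k : ℕ, C.mulVec ((A ^ k).mulVec x) = 0 := by
  set L := (obsL C x).toContinuousLinearMap with hL
  have key : ∀ k : ℕ, ∀ t : ℝ,
      C.mulVec ((A ^ k * NormedSpace.exp (t • A)).mulVec x) = 0 := by
    intro k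
    induction k with
    | zero => intro t; simpa using h t
    | succ k ih =>
      intro t
      have hφ : HasDerivAt (fun u : ℝ => NormedSpace.exp (u • A))
          (A * NormedSpace.exp (t • A)) t := hasDerivAt_exp_smul_const' A t
      have h1 : HasDerivAt (fun u : ℝ => L (A ^ k * NormedSpace.exp (u • A)))
          (L (A ^ k * (A * NormedSpace.exp (t • A)))) t := by
        have hmul : HasDerivAt (fun u : ℝ => A ^ k * NormedSpace.exp (u • A))
            (A ^ k * (A * NormedSpace.exp (t • A))) t := hφ.const_mul (A ^ k)
        exact L.hasFDerivAt.comp_hasDerivAt t hmul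
      have h2 : (fun u : ℝ => L (A ^ k * NormedSpace.exp (u • A))) = fun _ => 0 := by
        funext u
        simpa [hL, LinearMap.coe_toContinuousLinearMap', obsL_apply] using ih u
      have h3 : HasDerivAt (fun u : ℝ => L (A ^ k * NormedSpace.exp (u • A)))
          (0 : Fin m → ℝ) t := by
        rw [h2]; exact hasDerivAt_const t 0
      have h4 : L (A ^ k * (A * NormedSpace.exp (t • A))) = 0 := h1.unique h3
      have h5 : A ^ k * (A * NormedSpace.exp (t • A))
          = A ^ (k + 1) * NormedSpace.exp (t • A) := by
        rw [← mul_assoc, ← pow_succ]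
      rw [← h5]
      simpa [hL, LinearMap.coe_toContinuousLinearMap', obsL_apply] using h4
  intro k
  have := key k 0
  simpa [zero_smul, NormedSpace.exp_zero] using this

/-- Conversely, if all `C Aᵏ x` vanish then the output is identically zero. -/
private lemma output_zero {n m : ℕ}
    (A : Matrix (Fin n) (Fin n) ℝ) (C : Matrix (Fin m) (Fin n) ℝ) (x : Fin n → ℝ)
    (h : ∀ k : ℕ, C.mulVec ((A ^ k).mulVec x) = 0) (t : ℝ) :
    C.mulVec ((NormedSpace.exp (t • A)).mulVec x) = 0 := by
  set L := (obsL C x).toContinuousLinearMap with hL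
  have hexp : NormedSpace.exp (t • A)
      = ∑' k : ℕ, ((Nat.factorial k : ℝ)⁻¹) • (t • A) ^ k := by
    rw [NormedSpace.exp_eq_tsum (𝕂 := ℝ)]
  have hsum : Summable fun k : ℕ => ((Nat.factorial k : ℝ)⁻¹) • (t • A) ^ k :=
    NormedSpace.expSeries_summable' (t • A)
  have : C.mulVec ((NormedSpace.exp (t • A)).mulVec x)
      = L (∑' k : ℕ, ((Nat.factorial k : ℝ)⁻¹) • (t • A) ^ k) := by
    rw [← hexp]; rfl
  rw [this, L.map_tsum hsum]
  have hterm : ∀ k : ℕ, L (((Nat.factorial k : ℝ)⁻¹) • (t • A) ^ k) = 0 := by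
    intro k
    rw [ContinuousLinearMap.map_smul]
    have : (t • A) ^ k = (t ^ k) • A ^ k := smul_pow t A k
    rw [this, ContinuousLinearMap.map_smul]
    have : L (A ^ k) = 0 := by
      simpa [hL, LinearMap.coe_toContinuousLinearMap', obsL_apply] using h k
    rw [this, smul_zero, smul_zero]
  simp [hterm]

end

/-- The continuous-time linear system `ẋ = A x`, `y = C x` is observable
(every initial state producing identically-zero output is zero) if and only if the
observability kernel `N(A,C) = {x | C Aᵏ x = 0 for all 0 ≤ k ≤ n−1}` is the zero subspace. -/
theorem observable_iff_obsKer_eq_zero (n m : ℕ) (hn : 0 < n) (hm : 0 < m)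
    (A : Matrix (Fin n) (Fin n) ℝ) (C : Matrix (Fin m) (Fin n) ℝ) :
    (∀ x : Fin n → ℝ,
        (∀ t : ℝ, C.mulVec ((NormedSpace.exp (t • A)).mulVec x) = 0) → x = 0) ↔
      {x : Fin n → ℝ | ∀ k : ℕ, k ≤ n - 1 → C.mulVec ((A ^ k).mulVec x) = 0} = {0} := by
  constructor
  · intro hobs
    ext x
    simp only [Set.mem_setOf_eq, Set.mem_singleton_iff]
    constructor
    · intro hx
      -- extend to all powers via Cayley–Hamilton
      have hCH : Polynomial.aeval A A.charpoly = 0 := Matrix.aeval_self_charpoly A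
      have hdeg : A.charpoly.natDegree = n := by
        rw [Matrix.charpoly_natDegree_eq_dim]; simp
      have hmonic : A.charpoly.Monic := Matrix.charpoly_monic A
      have hAn : A ^ n = -(∑ i ∈ Finset.range n, A.charpoly.coeff i • A ^ i) := by
        have := Polynomial.aeval_eq_sum_range (p := A.charpoly) A
        rw [hdeg, Finset.sum_range_succ] at this
        have hcn : A.charpoly.coeff n = 1 := by
          have := hmonic.coeff_natDegree
          rwa [hdeg] at this
        rw [hcn, one_smul, hCH] at this
        exact eq_neg_of_add_eq_zero_right this.symm
      have hall : ∀ k : ℕ, C.mulVec ((A ^ k).mulVec x) = 0 := by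
        intro k
        induction k using Nat.strong_induction_on with
        | _ k ih =>
          by_cases hk : k ≤ n - 1
          · exact hx k hk
          · have hkn : n ≤ k := by omega
            have hsplit : A ^ k = A ^ (k - n) * A ^ n := by
              rw [← pow_add]; congr 1; omega
            have : C.mulVec ((A ^ k).mulVec x)
                = obsL C x (A ^ (k - n) * A ^ n) := by rw [hsplit]; rfl
            rw [this, hAn, mul_neg, Finset.mul_sum, map_neg, map_sum]
            have hterm : ∀ i ∈ Finset.range n,
                obsL C x (A ^ (k - n) * A.charpoly.coeff i • A ^ i) = 0 := by
              intro i hi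
              have hi' : i < n := Finset.mem_range.mp hi
              rw [mul_smul_comm, LinearMap.map_smul, ← pow_add]
              have : C.mulVec ((A ^ (k - n + i)).mulVec x) = 0 := ih _ (by omega)
              rw [obsL_apply, this, smul_zero]
            rw [Finset.sum_congr rfl hterm]
            simp
      exact hobs x (output_zero A C x hall)
    · rintro rfl
      intro k _
      simp [Matrix.mulVec_zero]
  · intro hker x hx
    have hall := all_pow_zero A C x hx
    have : x ∈ {x : Fin n → ℝ | ∀ k : ℕ, k ≤ n - 1 → C.mulVec ((A ^ k).mulVec x) = 0} :=
      fun k _ => hall k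
    rwa [hker] at this
end

section
/- Let n, m be positive integers, A an n×n real matrix, C an m×n real matrix, and x ∈ ℝⁿ. Then C·exp(tA)·x = 0 for all t ∈ ℝ if and only if C Aᵏ x = 0 for every natural number k. -/
open Matrix

/-- `C·exp(tA)·x = 0` for all `t ∈ ℝ` iff `C Aᵏ x = 0` for every natural `k`. -/
theorem output_zero_iff_powers_annihilate (n m : ℕ) (hn : 0 < n) (hm : 0 < m)
    (A : Matrix (Fin n) (Fin n) ℝ) (C : Matrix (Fin m) (Fin n) ℝ) (x : Fin n → ℝ) :
    (∀ t : ℝ, C.mulVec ((NormedSpace.exp (t • A)).mulVec x) = 0) ↔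
      (∀ k : ℕ, C.mulVec ((A ^ k).mulVec x) = 0) := by
  letI : NormedAddCommGroup (Matrix (Fin n) (Fin n) ℝ) := Matrix.linftyOpNormedAddCommGroup
  letI : NormedRing (Matrix (Fin n) (Fin n) ℝ) := Matrix.linftyOpNormedRing
  letI : NormedAlgebra ℝ (Matrix (Fin n) (Fin n) ℝ) := Matrix.linftyOpNormedAlgebra
  set L : Matrix (Fin n) (Fin n) ℝ →L[ℝ] (Fin m → ℝ) :=
    LinearMap.toContinuousLinearMap
      { toFun := fun M => C.mulVec (M.mulVec x)
        map_add' := by intro M N; simp [Matrix.add_mulVec, Matrix.mulVec_add]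
        map_smul' := by
          intro a M
          show C *ᵥ ((a • M) *ᵥ x) = a • (C *ᵥ (M *ᵥ x))
          rw [Matrix.smul_mulVec, Matrix.mulVec_smul] } with hLdef
  have hLapp : ∀ M : Matrix (Fin n) (Fin n) ℝ, L M = C.mulVec (M.mulVec x) := fun M => rfl
  constructor
  · intro h
    have key : ∀ k : ℕ, ∀ t : ℝ, L (NormedSpace.exp (t • A) * A ^ k) = 0 := by
      intro k
      induction k with
      | zero => intro t; simpa [hLapp] using h t
      | succ k ih =>
        intro t
        have h1 : HasDerivAt (fun u : ℝ => NormedSpace.exp (u • A) * A ^ k)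
            (NormedSpace.exp (t • A) * A * A ^ k) t :=
          (hasDerivAt_exp_smul_const A t).mul_const _
        have hd : HasDerivAt (fun u : ℝ => L (NormedSpace.exp (u • A) * A ^ k))
            (L (NormedSpace.exp (t • A) * A * A ^ k)) t :=
          L.hasFDerivAt.comp_hasDerivAt t h1
        have hzero : HasDerivAt (fun u : ℝ => L (NormedSpace.exp (u • A) * A ^ k))
            (0 : Fin m → ℝ) t := by
          have he : (fun u : ℝ => L (NormedSpace.exp (u • A) * A ^ k))
              = fun _ : ℝ => (0 : Fin m → ℝ) := funext fun u => ih u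
          rw [he]; exact hasDerivAt_const t 0
        have huniq := hd.unique hzero
        rw [mul_assoc, ← pow_succ'] at huniq
        exact huniq
    intro k
    have h0 := key k 0
    rw [zero_smul, NormedSpace.exp_zero, one_mul] at h0
    simpa [hLapp] using h0
  · intro h t
    have hs : HasSum (fun k : ℕ => (k.factorial : ℝ)⁻¹ • (t • A) ^ k)
        (NormedSpace.exp (t • A)) := NormedSpace.exp_series_hasSum_exp' (t • A)
    have hs2 : HasSum (fun k : ℕ => L ((k.factorial : ℝ)⁻¹ • (t • A) ^ k))
        (L (NormedSpace.exp (t • A))) := L.hasSum hs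
    have hterm : ∀ k : ℕ, L ((k.factorial : ℝ)⁻¹ • (t • A) ^ k) = 0 := by
      intro k
      rw [smul_pow, _root_.map_smul, _root_.map_smul]
      have hk : L (A ^ k) = 0 := h k
      rw [hk, smul_zero, smul_zero]
    rw [funext hterm] at hs2
    have : L (NormedSpace.exp (t • A)) = 0 := hs2.unique hasSum_zero
    exact this
end

section
/- Let Rc, Rg, w0 ∈ ℝ and Lc, Lg, Cf ∈ ℝ with Lc ≠ 0, Lg ≠ 0, Cf ≠ 0. Let A be the 6×6 real matrix with rows (−Rc/Lc, w0, 0, 0, −1/Lc, 0), (−w0, −Rc/Lc, 0, 0, 0, −1/Lc), (0, 0, −Rg/Lg, w0, 1/Lg, 0), (0, 0, −w0, −Rg/Lg, 0, 1/Lg), (1/Cf, 0, −1/Cf, 0, 0, w0), (0, 1/Cf, 0, −1/Cf, w0, 0), and let C be the 2×6 matrix selecting the fifth and sixth coordinates, i.e., C = [[0,0,0,0,1,0],[0,0,0,0,0,1]]. Then the observability kernel N(A,C) = {x ∈ ℝ⁶ : C Aᵏ x = 0 for all 0 ≤ k ≤ 5} is the zero subspace (equivalently, the observability matrix [C; CA;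 …; CA⁵] has rank 6) if and only if Rc/Lc ≠ Rg/Lg. -/
open Matrix

@[simp] lemma my_cons_val_five {α : Type*} {m : ℕ} (x : α) (u : Fin (m+5) → α) :
    Matrix.vecCons x u 5 =
      Matrix.vecHead (Matrix.vecTail (Matrix.vecTail (Matrix.vecTail (Matrix.vecTail u)))) := rfl


/-- For the ac-side state matrix `A` of a single-stage PV system with output
matrix `C` selecting the fifth and sixth coordinates, the observability kernel
`N(A,C) = {x ∈ ℝ⁶ | C Aᵏ x = 0 for 0 ≤ k ≤ 5}` is the zero subspace iff `Rc/Lc ≠ Rg/Lg`. -/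
theorem pv_ac_side_observable_iff (Rc Rg w0 Lc Lg Cf : ℝ)
    (hLc : Lc ≠ 0) (hLg : Lg ≠ 0) (hCf : Cf ≠ 0) :
    let A : Matrix (Fin 6) (Fin 6) ℝ :=
      !![-Rc/Lc,   w0,      0,       0,      -1/Lc,   0;
         -w0,     -Rc/Lc,   0,       0,       0,     -1/Lc;
          0,       0,      -Rg/Lg,   w0,      1/Lg,   0;
          0,       0,      -w0,     -Rg/Lg,   0,      1/Lg;
          1/Cf,    0,      -1/Cf,    0,       0,      w0;
          0,       1/Cf,    0,      -1/Cf,    w0,     0]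
    let C : Matrix (Fin 2) (Fin 6) ℝ :=
      !![0, 0, 0, 0, 1, 0;
         0, 0, 0, 0, 0, 1]
    ({x : Fin 6 → ℝ | ∀ k : ℕ, k ≤ 5 → C.mulVec ((A ^ k).mulVec x) = 0} = {0}
      ↔ Rc / Lc ≠ Rg / Lg) := by
  intro A C
  have hCf' : (Cf : ℝ)⁻¹ ≠ 0 := inv_ne_zero hCf
  constructor
  · -- observable → Rc/Lc ≠ Rg/Lg
    intro h hab
    -- witness v = (1,0,1,0,0,0)
    set v : Fin 6 → ℝ := ![1, 0, 1, 0, 0, 0] with hv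
    have key : ∀ y : Fin 6 → ℝ, (y 0 = y 2 ∧ y 1 = y 3 ∧ y 4 = 0 ∧ y 5 = 0) →
        ((A.mulVec y) 0 = (A.mulVec y) 2 ∧ (A.mulVec y) 1 = (A.mulVec y) 3 ∧
          (A.mulVec y) 4 = 0 ∧ (A.mulVec y) 5 = 0) := by
      rintro y ⟨e1, e2, e3, e4⟩
      simp only [A, Matrix.mulVec, dotProduct, Fin.sum_univ_six, Matrix.of_apply,
        Matrix.cons_val', Matrix.cons_val_zero, Matrix.cons_val_one, Matrix.head_cons,
        Matrix.cons_val_two, Matrix.cons_val_three, Matrix.cons_val_four, my_cons_val_five,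
        Matrix.vecHead, Matrix.vecTail, Matrix.empty_val', Matrix.cons_val_fin_one,
        Function.comp_apply, Fin.succ]
      norm_num
      refine ⟨?_, ?_, ?_, ?_⟩
      · linear_combination (-(y 0)) * hab - (Rg/Lg) * e1 + w0 * e2 + (-1/Lc - 1/Lg) * e3
      · linear_combination (-(y 1)) * hab - (Rg/Lg) * e2 - w0 * e1 + (-1/Lc - 1/Lg) * e4
      · linear_combination (1/Cf) * e1 + w0 * e4
      · linear_combination (1/Cf) * e2 + w0 * e3
    have hC : ∀ z : Fin 6 → ℝ, z 4 = 0 → z 5 = 0 → C.mulVec z = 0 := by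
      intro z h4 h5
      funext i
      fin_cases i <;>
        simp [C, Matrix.mulVec, dotProduct, Fin.sum_univ_six, h4, h5]
    have inv : ∀ k : ℕ, ((A ^ k).mulVec v) 0 = ((A ^ k).mulVec v) 2 ∧
        ((A ^ k).mulVec v) 1 = ((A ^ k).mulVec v) 3 ∧
        ((A ^ k).mulVec v) 4 = 0 ∧ ((A ^ k).mulVec v) 5 = 0 := by
      intro k
      induction k with
      | zero => simp [v, pow_zero, Matrix.one_mulVec]
      | succ n ih =>
        rw [pow_succ', ← Matrix.mulVec_mulVec]
        exact key _ ih
    have hvmem : v ∈ {x : Fin 6 → ℝ | ∀ k : ℕ, k ≤ 5 → C.mulVec ((A ^ k).mulVec x) = 0} := by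
      intro k _
      exact hC _ (inv k).2.2.1 (inv k).2.2.2
    rw [h] at hvmem
    have : v 0 = 0 := by rw [Set.mem_singleton_iff.mp hvmem]; rfl
    simp [v] at this
  · -- Rc/Lc ≠ Rg/Lg → observable
    intro hab
    have hd : Rg/Lg - Rc/Lc ≠ 0 := sub_ne_zero.mpr (Ne.symm hab)
    ext x
    simp only [Set.mem_setOf_eq, Set.mem_singleton_iff]
    constructor
    · intro h
      have h0 := h 0 (by norm_num)
      have h1 := h 1 (by norm_num)
      have h2 := h 2 (by norm_num)
      rw [pow_zero, Matrix.one_mulVec] at h0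
      rw [pow_one] at h1
      rw [pow_two, ← Matrix.mulVec_mulVec] at h2
      have h00 := congrFun h0 0
      have h01 := congrFun h0 1
      have h10 := congrFun h1 0
      have h11 := congrFun h1 1
      have h20 := congrFun h2 0
      have h21 := congrFun h2 1
      simp [A, C, Matrix.mulVec, dotProduct, Fin.sum_univ_six]
        at h00 h01 h10 h11 h20 h21
      -- h00 : x 4 = 0, h01 : x 5 = 0
      have e02 : Cf⁻¹ * (x 0 - x 2) = 0 := by linear_combination h10 - w0 * h01
      have e13 : Cf⁻¹ * (x 1 - x 3) = 0 := by linear_combination h11 - w0 * h00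
      have hx02 : x 2 = x 0 :=
        (sub_eq_zero.mp ((mul_eq_zero.mp e02).resolve_left hCf')).symm
      have hx13 : x 3 = x 1 :=
        (sub_eq_zero.mp ((mul_eq_zero.mp e13).resolve_left hCf')).symm
      rw [hx02, hx13, h00] at h20
      rw [hx02, hx13, h01] at h21
      have e0 : Cf⁻¹ * ((Rg/Lg - Rc/Lc) * x 0) = 0 := by linear_combination h20
      have e1 : Cf⁻¹ * ((Rg/Lg - Rc/Lc) * x 1) = 0 := by linear_combination h21
      have hx0 : x 0 = 0 :=
        (mul_eq_zero.mp ((mul_eq_zero.mp e0).resolve_left hCf')).resolve_left hd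
      have hx1 : x 1 = 0 :=
        (mul_eq_zero.mp ((mul_eq_zero.mp e1).resolve_left hCf')).resolve_left hd
      funext i
      fin_cases i <;>
        simp [hx0, hx1, hx02, hx13, h00, h01]
    · rintro rfl k _
      simp
end

section
/- Let Rc, Rg, w0 ∈ ℝ and Lc, Lg, Cf ∈ ℝ with Lc ≠ 0, Lg ≠ 0, Cf ≠ 0, and suppose Rc/Lc = Rg/Lg. Let A be the 6×6 real matrix with rows (−Rc/Lc, w0, 0, 0, −1/Lc, 0), (−w0, −Rc/Lc, 0, 0, 0, −1/Lc), (0, 0, −Rg/Lg, w0, 1/Lg, 0), (0, 0, −w0, −Rg/Lg, 0, 1/Lg), (1/Cf, 0, −1/Cf, 0, 0, w0), (0, 1/Cf, 0, −1/Cf, w0, 0), and C = [[0,0,0,0,1,0],[0,0,0,0,0,1]]. Then the observability kernel N(A,C) = {x ∈ ℝ⁶ : C Aᵏ x = 0 for all 0 ≤ k ≤ 5} equals the two-dimensional subspace W = {x ∈ ℝ⁶ : x₁ = x₃, x₂ = x₄, x₅ = 0, x₆ = 0}. -/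
open Matrix

private lemma vec6_0 {α : Type*} {n : ℕ} (a : α) (u : Fin (n+1) → α) : vecCons a u 0 = a := rfl
private lemma vec6_1 {α : Type*} (a : α) (u : Fin 1 → α) : vecCons a u 1 = u 0 := rfl
private lemma vec6_1' {α : Type*} (a : α) (u : Fin 5 → α) : vecCons a u 1 = u 0 := rfl
private lemma vec6_2 {α : Type*} (a : α) (u : Fin 5 → α) : vecCons a u 2 = u 1 := rfl
private lemma vec6_3 {α : Type*} (a : α) (u : Fin 5 → α) : vecCons a u 3 = u 2 := rfl
private lemma vec6_4 {α : Type*} (a : α) (u : Fin 5 → α) : vecCons a u 4 = u 3 := rfl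
private lemma vec6_5 {α : Type*} (a : α) (u : Fin 5 → α) : vecCons a u 5 = u 4 := rfl
private lemma vec5_1 {α : Type*} (a : α) (u : Fin 4 → α) : vecCons a u 1 = u 0 := rfl
private lemma vec5_2 {α : Type*} (a : α) (u : Fin 4 → α) : vecCons a u 2 = u 1 := rfl
private lemma vec5_3 {α : Type*} (a : α) (u : Fin 4 → α) : vecCons a u 3 = u 2 := rfl
private lemma vec5_4 {α : Type*} (a : α) (u : Fin 4 → α) : vecCons a u 4 = u 3 := rfl
private lemma vec4_1 {α : Type*} (a : α) (u : Fin 3 → α) : vecCons a u 1 = u 0 := rfl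
private lemma vec4_2 {α : Type*} (a : α) (u : Fin 3 → α) : vecCons a u 2 = u 1 := rfl
private lemma vec4_3 {α : Type*} (a : α) (u : Fin 3 → α) : vecCons a u 3 = u 2 := rfl
private lemma vec3_1 {α : Type*} (a : α) (u : Fin 2 → α) : vecCons a u 1 = u 0 := rfl
private lemma vec3_2 {α : Type*} (a : α) (u : Fin 2 → α) : vecCons a u 2 = u 1 := rfl
private lemma vec1_0 {α : Type*} (a : α) (u : Fin 0 → α) : vecCons a u 0 = a := rfl
private lemma vmk0 {α : Type*} (a : α) (u : Fin 5 → α) {h : 0 < 6} : vecCons a u ⟨0, h⟩ = a := rfl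
private lemma vmk1 {α : Type*} (a : α) (u : Fin 5 → α) {h : 1 < 6} : vecCons a u ⟨1, h⟩ = u 0 := rfl
private lemma vmk2 {α : Type*} (a : α) (u : Fin 5 → α) {h : 2 < 6} : vecCons a u ⟨2, h⟩ = u 1 := rfl
private lemma vmk3 {α : Type*} (a : α) (u : Fin 5 → α) {h : 3 < 6} : vecCons a u ⟨3, h⟩ = u 2 := rfl
private lemma vmk4 {α : Type*} (a : α) (u : Fin 5 → α) {h : 4 < 6} : vecCons a u ⟨4, h⟩ = u 3 := rfl
private lemma vmk5 {α : Type*} (a : α) (u : Fin 5 → α) {h : 5 < 6} : vecCons a u ⟨5, h⟩ = u 4 := rfl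

/-- If `Rc/Lc = Rg/Lg`, the observability kernel of the ac-side PV model equals
the two-dimensional subspace `W = {x ∈ ℝ⁶ | x₁ = x₃, x₂ = x₄, x₅ = 0, x₆ = 0}`. -/
theorem pv_ac_side_obsKer_eq (Rc Rg w0 Lc Lg Cf : ℝ)
    (hLc : Lc ≠ 0) (hLg : Lg ≠ 0) (hCf : Cf ≠ 0) (h : Rc / Lc = Rg / Lg) :
    let A : Matrix (Fin 6) (Fin 6) ℝ :=
      !![-Rc/Lc,   w0,      0,       0,      -1/Lc,   0;
         -w0,     -Rc/Lc,   0,       0,       0,     -1/Lc;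
          0,       0,      -Rg/Lg,   w0,      1/Lg,   0;
          0,       0,      -w0,     -Rg/Lg,   0,      1/Lg;
          1/Cf,    0,      -1/Cf,    0,       0,      w0;
          0,       1/Cf,    0,      -1/Cf,    w0,     0]
    let C : Matrix (Fin 2) (Fin 6) ℝ :=
      !![0, 0, 0, 0, 1, 0;
         0, 0, 0, 0, 0, 1]
    {x : Fin 6 → ℝ | ∀ k : ℕ, k ≤ 5 → C.mulVec ((A ^ k).mulVec x) = 0} =
      {x : Fin 6 → ℝ | x 0 = x 2 ∧ x 1 = x 3 ∧ x 4 = 0 ∧ x 5 = 0} := by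
  intro A C
  have hCf' : (1 : ℝ) / Cf ≠ 0 := one_div_ne_zero hCf
  -- C applied to any vector
  have hC : ∀ v : Fin 6 → ℝ, C.mulVec v = ![v 4, v 5] := by
    intro v
    funext i
    fin_cases i <;>
      simp [C, Matrix.mulVec, dotProduct, Fin.sum_univ_six,
        vec6_0, vec6_1, vec6_1', vec6_2, vec6_3, vec6_4, vec6_5, vec5_1, vec5_2, vec5_3, vec5_4, vec4_1, vec4_2, vec4_3, vec3_1, vec3_2, vec1_0, vmk0, vmk1, vmk2, vmk3, vmk4, vmk5]
  -- A applied to any vector, componentwise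
  have hA : ∀ (v : Fin 6 → ℝ),
      A.mulVec v = ![-Rc/Lc * v 0 + w0 * v 1 + (-1/Lc) * v 4,
                     -w0 * v 0 + (-Rc/Lc) * v 1 + (-1/Lc) * v 5,
                     -Rg/Lg * v 2 + w0 * v 3 + (1/Lg) * v 4,
                     -w0 * v 2 + (-Rg/Lg) * v 3 + (1/Lg) * v 5,
                     (1/Cf) * v 0 + (-1/Cf) * v 2 + w0 * v 5,
                     (1/Cf) * v 1 + (-1/Cf) * v 3 + w0 * v 4] := by
    intro v
    funext i
    fin_cases i <;>
      · simp only [A, Matrix.mulVec, dotProduct, Fin.sum_univ_six, Matrix.cons_val',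
          Matrix.cons_val_zero, Matrix.cons_val_one, Matrix.head_cons, Matrix.head_fin_const,
          Matrix.empty_val', Matrix.cons_val_fin_one, Matrix.of_apply,
          vec6_0, vec6_1, vec6_1', vec6_2, vec6_3, vec6_4, vec6_5, vec5_1, vec5_2, vec5_3, vec5_4, vec4_1, vec4_2, vec4_3, vec3_1, vec3_2, vec1_0, vmk0, vmk1, vmk2, vmk3, vmk4, vmk5]
        ring
  ext x
  simp only [Set.mem_setOf_eq]
  constructor
  · intro hx
    have h0 := hx 0 (by norm_num)
    have h1 := hx 1 (by norm_num)
    rw [pow_zero, Matrix.one_mulVec, hC] at h0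
    rw [pow_one, hA, hC] at h1
    have e4 : x 4 = 0 := by simpa using congrFun h0 0
    have e5 : x 5 = 0 := by simpa using congrFun h0 1
    have g0 : (1/Cf) * x 0 + (-1/Cf) * x 2 + w0 * x 5 = 0 := by
      simpa [vec6_0, vec6_1, vec6_1', vec6_2, vec6_3, vec6_4, vec6_5, vec5_1, vec5_2, vec5_3, vec5_4, vec4_1, vec4_2, vec4_3, vec3_1, vec3_2, vec1_0, vmk0, vmk1, vmk2, vmk3, vmk4, vmk5] using congrFun h1 0
    have g1 : (1/Cf) * x 1 + (-1/Cf) * x 3 + w0 * x 4 = 0 := by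
      simpa [vec6_0, vec6_1, vec6_1', vec6_2, vec6_3, vec6_4, vec6_5, vec5_1, vec5_2, vec5_3, vec5_4, vec4_1, vec4_2, vec4_3, vec3_1, vec3_2, vec1_0, vmk0, vmk1, vmk2, vmk3, vmk4, vmk5] using congrFun h1 1
    rw [e5] at g0
    rw [e4] at g1
    have e0 : x 0 = x 2 := by
      have h' : (1/Cf) * (x 0 - x 2) = 0 := by linear_combination g0
      rcases mul_eq_zero.mp h' with h'' | h''
      · exact absurd h'' hCf'
      · linarith
    have e1 : x 1 = x 3 := by
      have h' : (1/Cf) * (x 1 - x 3) = 0 := by linear_combination g1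
      rcases mul_eq_zero.mp h' with h'' | h''
      · exact absurd h'' hCf'
      · linarith
    exact ⟨e0, e1, e4, e5⟩
  · rintro ⟨h02, h13, h4, h5⟩ k _
    have key : ∀ v : Fin 6 → ℝ, (v 0 = v 2 ∧ v 1 = v 3 ∧ v 4 = 0 ∧ v 5 = 0) →
        ((A.mulVec v) 0 = (A.mulVec v) 2 ∧ (A.mulVec v) 1 = (A.mulVec v) 3 ∧
         (A.mulVec v) 4 = 0 ∧ (A.mulVec v) 5 = 0) := by
      rintro v ⟨hv0, hv1, hv4, hv5⟩
      rw [hA]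
      simp only [vec6_0, vec6_1, vec6_1', vec6_2, vec6_3, vec6_4, vec6_5, vec5_1, vec5_2, vec5_3, vec5_4, vec4_1, vec4_2, vec4_3, vec3_1, vec3_2, vec1_0, vmk0, vmk1, vmk2, vmk3, vmk4, vmk5]
      refine ⟨?_, ?_, ?_, ?_⟩
      · simp only [hv0, hv1, hv4, hv5]; linear_combination (-(v 2)) * h
      · simp only [hv0, hv1, hv4, hv5]; linear_combination (-(v 3)) * h
      · simp only [hv0, hv1, hv4, hv5]; ring
      · simp only [hv0, hv1, hv4, hv5]; ring
    have inv : ∀ k : ℕ, ((A ^ k).mulVec x) 0 = ((A ^ k).mulVec x) 2 ∧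
        ((A ^ k).mulVec x) 1 = ((A ^ k).mulVec x) 3 ∧
        ((A ^ k).mulVec x) 4 = 0 ∧ ((A ^ k).mulVec x) 5 = 0 := by
      intro k
      induction k with
      | zero => simpa [Matrix.one_mulVec] using ⟨h02, h13, h4, h5⟩
      | succ n ih =>
        have e : (A ^ (n+1)).mulVec x = A.mulVec ((A ^ n).mulVec x) := by
          rw [pow_succ', ← Matrix.mulVec_mulVec]
        rw [e]
        exact key _ ih
    obtain ⟨w0', w1', w4', w5'⟩ := inv k
    rw [hC]
    funext i
    fin_cases i <;> simp [vec6_0, vec6_1, w4', w5']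
end

section
/- Let n be a positive integer, x̂ ∈ ℝⁿ, P and S n×n real matrices with Sᵀ S = n·P, F an n×n real matrix and b ∈ ℝⁿ. Define the 2n+1 sigma points x⁽⁰⁾ = x̂, x⁽ⁱ⁾ = x̂ + Sᵢ and x⁽ⁿ⁺ⁱ⁾ = x̂ − Sᵢ for i = 1,…,n, where Sᵢ denotes the i-th row of S viewed as a vector in ℝⁿ, and propagate them by y⁽ⁱ⁾ = F x⁽ⁱ⁾ + b for i = 0,…,2n. Then the sample covariance of the propagated sigma points about ȳ = F x̂ + b equals the exact propagated covariance: (1/(2n)) · Σ_{i=1}^{2n} (y⁽ⁱ⁾ − ȳ)(y⁽ⁱ⁾ − ȳ)ᵀ = F P Fᵀ, where (y⁽ⁱ⁾ − ȳ)(y⁽ⁱ⁾ − ȳ)ᵀ denotes the outer product of the vector y⁽ⁱ⁾ − ȳ with itself. -/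
open Matrix

lemma sum_vecMulVec_rows (n : ℕ) (S : Matrix (Fin n) (Fin n) ℝ) :
    ∑ i : Fin n, vecMulVec (S i) (S i) = Sᵀ * S := by
  ext a c
  simp [Matrix.sum_apply, vecMulVec_apply, Matrix.mul_apply, transpose_apply]

/-- If `Sᵀ S = n·P` and the sigma points `x̂`, `x̂ ± Sᵢ` are propagated through
`x ↦ F x + b`, then the sample covariance of the propagated points about `ȳ = F x̂ + b`
equals the exact propagated covariance `F P Fᵀ`. -/
theorem sigma_points_propagated_covariance (n : ℕ) (hn : 0 < n) (xhat : Fin n → ℝ)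
    (P S F : Matrix (Fin n) (Fin n) ℝ) (b : Fin n → ℝ) (hS : Sᵀ * S = (n : ℝ) • P) :
    (1 / (2 * (n : ℝ))) •
        ((∑ i : Fin n, vecMulVec ((F.mulVec (xhat + S i) + b) - (F.mulVec xhat + b))
            ((F.mulVec (xhat + S i) + b) - (F.mulVec xhat + b))) +
          ∑ i : Fin n, vecMulVec ((F.mulVec (xhat - S i) + b) - (F.mulVec xhat + b))
            ((F.mulVec (xhat - S i) + b) - (F.mulVec xhat + b))) = F * P * Fᵀ := by
  have h1 : ∀ i : Fin n, (F.mulVec (xhat + S i) + b) - (F.mulVec xhat + b) = F.mulVec (S i) := by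
    intro i
    rw [mulVec_add]
    abel
  have h2 : ∀ i : Fin n, (F.mulVec (xhat - S i) + b) - (F.mulVec xhat + b) = -(F.mulVec (S i)) := by
    intro i
    rw [mulVec_sub]
    abel
  have hv : ∀ i : Fin n, vecMulVec (F.mulVec (S i)) (F.mulVec (S i)) =
      F * vecMulVec (S i) (S i) * Fᵀ := by
    intro i
    rw [vecMulVec_eq (Fin 1), vecMulVec_eq (Fin 1), replicateCol_mulVec, replicateRow_mulVec, transpose_mul, transpose_replicateCol,
      Matrix.mul_assoc, Matrix.mul_assoc, Matrix.mul_assoc]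
  simp only [h1, h2, vecMulVec_apply]
  have hneg : ∀ i : Fin n, vecMulVec (-(F.mulVec (S i))) (-(F.mulVec (S i))) =
      vecMulVec (F.mulVec (S i)) (F.mulVec (S i)) := by
    intro i; ext a c; simp [vecMulVec_apply]
  simp only [hneg, hv, ← Finset.sum_mul, ← Finset.mul_sum, sum_vecMulVec_rows, hS]
  have hn' : (n : ℝ) ≠ 0 := Nat.cast_ne_zero.mpr hn.ne'
  rw [Matrix.mul_smul, Matrix.smul_mul]
  rw [← two_smul ℝ ((n : ℝ) • (F * P * Fᵀ)), smul_smul, smul_smul]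
  rw [one_div, mul_assoc, inv_mul_cancel₀ (by positivity : (2 * (n : ℝ)) ≠ 0), one_smul]
end

section
/- Let n, m be positive integers, P⁻ an n×n real symmetric matrix, P_xy an n×m real matrix, and P_y an m×m real symmetric positive definite matrix. For an n×m real matrix K define the posterior covariance P(K) = P⁻ − K P_xyᵀ − P_xy Kᵀ + K P_y Kᵀ. Then the Kalman gain K* = P_xy P_y⁻¹ minimizes the trace of the posterior covariance: trace(P(K*)) ≤ trace(P(K)) for every n×m real matrix K. -/
open Matrix

/-- The Kalman gain `K* = P_xy P_y⁻¹` minimizes the trace of the posterior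
covariance `P(K) = P⁻ − K P_xyᵀ − P_xy Kᵀ + K P_y Kᵀ` over all gains `K`, where `P⁻` is
symmetric and `P_y` is symmetric positive definite. -/
theorem kalman_gain_minimizes_trace (n m : ℕ) (hn : 0 < n) (hm : 0 < m)
    (Pm : Matrix (Fin n) (Fin n) ℝ) (Pxy : Matrix (Fin n) (Fin m) ℝ)
    (Py : Matrix (Fin m) (Fin m) ℝ)
    (hPm : Pm.IsSymm) (hPySymm : Py.IsSymm) (hPy : Py.PosDef) :
    ∀ K : Matrix (Fin n) (Fin m) ℝ,
      (Pm - (Pxy * Py⁻¹) * Pxyᵀ - Pxy * (Pxy * Py⁻¹)ᵀ +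
          (Pxy * Py⁻¹) * Py * (Pxy * Py⁻¹)ᵀ).trace ≤
        (Pm - K * Pxyᵀ - Pxy * Kᵀ + K * Py * Kᵀ).trace := by
  intro K
  have hdet : IsUnit Py.det := hPy.det_pos.ne'.isUnit
  have hinv' : Py⁻¹ * Py = 1 := Matrix.nonsing_inv_mul Py hdet
  obtain ⟨E, hE⟩ : ∃ E, Pxy * Py⁻¹ = E := ⟨_, rfl⟩
  rw [hE]
  have hPxy : Pxy = E * Py := by
    rw [← hE, Matrix.mul_assoc, hinv', Matrix.mul_one]
  have key : Pm - K * Pxyᵀ - Pxy * Kᵀ + K * Py * Kᵀ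
      = (Pm - E * Pxyᵀ - Pxy * Eᵀ + E * Py * Eᵀ) + (K - E) * Py * (K - E)ᵀ := by
    simp only [hPxy, Matrix.transpose_mul, hPySymm.eq, Matrix.transpose_sub,
      Matrix.sub_mul, Matrix.mul_sub, Matrix.mul_assoc]
    abel
  rw [key]
  simp only [Matrix.trace_add]
  have hps : ((K - E) * Py * (K - E)ᵀ).PosSemidef := by
    have := hPy.posSemidef.mul_mul_conjTranspose_same (K - E)
    simpa using this
  have htr : 0 ≤ ((K - E) * Py * (K - E)ᵀ).trace := by
    apply Finset.sum_nonneg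
    intro i _
    have h := hps.diag_nonneg (i := i)
    simpa [dotProduct, Matrix.mulVec, Pi.single_apply, Finset.sum_ite_eq,
      Finset.sum_ite_eq'] using h
  linarith
end
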